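/- There exists a polynomial P in four variables with complex coefficients such that for all (x,y,z,w) ∈ ℂ⁴ with z ≠ 0, H(t; z(α₅−η−xz−yw), yz, 1/z, w/z) = P(x,y,z,w). In other words, the FST Hamiltonian H agrees with a polynomial function of the coordinates (x₃^{[01]}, y₃^{[01]}, z₃^{[01]}, w₃^{[01]}) = (−(q₁p₁+q₂p₂−α₅+η)p₁, q₂p₁, 1/p₁, p₂/p₁), whose inverse is (q₁,q₂,p₁,p₂) = (z(α₅−η−xz−yw), yz, 1/z, w/z). -/

import Mathlib

/-- The Painlevé VI-type Hamiltonian `H_VI(a,b,c,d;q,p)`. -/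
noncomputable def Hvi (t a b c d q p : ℂ) : ℂ :=
  (q * (q - 1) * (q - t) * p ^ 2 -
      (a * (q - 1) * (q - t) + b * q * (q - t) + (c - 1) * q * (q - 1)) * p + d * q) /
    (t * (t - 1))

/-- The Hamiltonian of the fourth-order FST Painlevé system. -/
noncomputable def HFST (α₀ α₁ α₂ α₃ α₄ α₅ η t q₁ q₂ p₁ p₂ : ℂ) : ℂ :=
  Hvi t (α₃ + α₅ - η) α₀ (α₂ + α₄) (α₁ * η) q₁ p₁ +
    Hvi t (α₁ + α₅ - η) (α₀ + α₂) α₄ (α₃ * η) q₂ p₂ +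
    (q₁ - 1) * (q₂ - t) * ((q₁ * p₁ + α₁) * p₂ + (q₂ * p₂ + α₃) * p₁) / (t * (t - 1))

/-!
Substituting `q = z Q`, `p = P / z` into the numerator of `H_VI` or of the coupling term of `H`
leaves a polynomial in `z, Q, P` plus a single pole `t S / z`. In the chart of the theorem
(`Q₁ = α₅ - η - x z - y w`, `Q₂ = y`, `P₁ = 1`, `P₂ = w`) the residues of the three pieces add up
to `S = -x z (1 + w)`, because the parameters `a` of the two `H_VI` blocks are `α₃ + α₅ - η` and
`α₁ + α₅ - η`. So the poles cancel and `t (t - 1) H` is a polynomial in `x, y, z, w`.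
-/

section Regular

-- Stated over any commutative ring so that `C` and `X` in `MvPolynomial (Fin 4) ℂ` can be
-- substituted to build the polynomial of the theorem.
variable {R : Type*} [CommRing R]

def hviRegular (t a b c d z Q P : R) : R :=
  Q * P ^ 2 * (z * Q ^ 2 - (1 + t) * Q) -
    P * (a * (z * Q ^ 2 - (1 + t) * Q) + b * (z * Q ^ 2 - t * Q) + (c - 1) * (z * Q ^ 2 - Q)) +
    d * z * Q

def couplingRegular (t α₁ α₃ z Q₁ Q₂ P₁ P₂ : R) : R :=
  (z * Q₁ * Q₂ - t * Q₁ - Q₂) * ((Q₁ * P₁ + α₁) * P₂ + (Q₂ * P₂ + α₃) * P₁)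

def hfstChartNumerator (α₀ α₁ α₂ α₃ α₄ α₅ η t x y z w : R) : R :=
  hviRegular t (α₃ + α₅ - η) α₀ (α₂ + α₄) (α₁ * η) z (α₅ - η - x * z - y * w) 1 +
    hviRegular t (α₁ + α₅ - η) (α₀ + α₂) α₄ (α₃ * η) z y w +
    couplingRegular t α₁ α₃ z (α₅ - η - x * z - y * w) y 1 w - t * x * (1 + w)

theorem map_hfstChartNumerator {S : Type*} [CommRing S] (φ : R →+* S)
    (α₀ α₁ α₂ α₃ α₄ α₅ η t x y z w : R) :
    φ (hfstChartNumerator α₀ α₁ α₂ α₃ α₄ α₅ η t x y z w) =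
      hfstChartNumerator (φ α₀) (φ α₁) (φ α₂) (φ α₃) (φ α₄) (φ α₅) (φ η) (φ t)
        (φ x) (φ y) (φ z) (φ w) := by
  simp only [hfstChartNumerator, hviRegular, couplingRegular, map_add, map_sub, map_mul,
    map_pow, map_one]

end Regular

theorem Hvi_mul_div (t a b c d z Q P : ℂ) (hz : z ≠ 0) :
    Hvi t a b c d (z * Q) (P / z) =
      (hviRegular t a b c d z Q P + t * (Q * P ^ 2 - a * P) / z) / (t * (t - 1)) := by
  rw [Hvi, hviRegular]
  congr 1
  field_simp
  ring

theorem coupling_mul_div (t α₁ α₃ z Q₁ Q₂ P₁ P₂ : ℂ) (hz : z ≠ 0) :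
    (z * Q₁ - 1) * (z * Q₂ - t) *
        ((z * Q₁ * (P₁ / z) + α₁) * (P₂ / z) + (z * Q₂ * (P₂ / z) + α₃) * (P₁ / z)) =
      couplingRegular t α₁ α₃ z Q₁ Q₂ P₁ P₂ +
        t * ((Q₁ * P₁ + α₁) * P₂ + (Q₂ * P₂ + α₃) * P₁) / z := by
  rw [couplingRegular]
  field_simp
  ring

theorem HFST_chart (α₀ α₁ α₂ α₃ α₄ α₅ η t x y z w : ℂ) (hz : z ≠ 0) :
    HFST α₀ α₁ α₂ α₃ α₄ α₅ η t (z * (α₅ - η - x * z - y * w)) (y * z) (1 / z) (w / z) =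
      hfstChartNumerator α₀ α₁ α₂ α₃ α₄ α₅ η t x y z w / (t * (t - 1)) := by
  have residue : (α₅ - η - x * z - y * w) - (α₃ + α₅ - η) + (y * w ^ 2 - (α₁ + α₅ - η) * w) +
      ((α₅ - η - x * z - y * w + α₁) * w + y * w + α₃) = -(x * z * (1 + w)) := by
    ring
  rw [HFST, mul_comm y z, Hvi_mul_div _ _ _ _ _ _ _ _ hz, Hvi_mul_div _ _ _ _ _ _ _ _ hz,
    coupling_mul_div _ _ _ _ _ _ _ _ hz, ← add_div, ← add_div, hfstChartNumerator]
  congr 1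
  field_simp
  linear_combination t * residue

theorem HFST_polynomial_in_C3_01_coordinates_general
    (t α₀ α₁ α₂ α₃ α₄ α₅ η : ℂ) :
    ∃ P : MvPolynomial (Fin 4) ℂ, ∀ x y z w : ℂ, z ≠ 0 →
      HFST α₀ α₁ α₂ α₃ α₄ α₅ η t (z * (α₅ - η - x * z - y * w)) (y * z) (1 / z) (w / z) =
        MvPolynomial.eval ![x, y, z, w] P := by
  open MvPolynomial in
  refine ⟨C (t * (t - 1))⁻¹ * hfstChartNumerator (C α₀) (C α₁) (C α₂) (C α₃) (C α₄) (C α₅) (C η)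
    (C t) (X 0) (X 1) (X 2) (X 3), fun x y z w hz => ?_⟩
  rw [HFST_chart _ _ _ _ _ _ _ _ _ _ _ _ hz, map_mul, map_hfstChartNumerator]
  simp [div_eq_inv_mul]

/-- The FST Hamiltonian `H` is a polynomial function of the coordinates
`(x₃^{[01]}, y₃^{[01]}, z₃^{[01]}, w₃^{[01]}) = (−(q₁p₁+q₂p₂−α₅+η)p₁, q₂p₁, 1/p₁, p₂/p₁)`
resolving the accessible singularity `C₃^{(01)}`; the inverse change of variables is
`(q₁,q₂,p₁,p₂) = (z(α₅−η−xz−yw), yz, 1/z, w/z)`. -/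
theorem HFST_polynomial_in_C3_01_coordinates
    (t α₀ α₁ α₂ α₃ α₄ α₅ η : ℂ) (ht0 : t ≠ 0) (ht1 : t ≠ 1)
    (hsum : α₀ + α₁ + α₂ + α₃ + α₄ + α₅ = 1) :
    ∃ P : MvPolynomial (Fin 4) ℂ, ∀ x y z w : ℂ, z ≠ 0 →
      HFST α₀ α₁ α₂ α₃ α₄ α₅ η t (z * (α₅ - η - x * z - y * w)) (y * z) (1 / z) (w / z) =
        MvPolynomial.eval ![x, y, z, w] P :=
  HFST_polynomial_in_C3_01_coordinates_general t α₀ α₁ α₂ α₃ α₄ α₅ η
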